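/- Let N ≥ 2, u ∈ (0,1) and Γ ∈ (0,1), and for weights w ∈ ℝ^N with ∑_{i=1}^{N} w_i = 1 define Q(w) = u(1−u)·( ∑_{i=1}^{N} w_i² + 2·∑_{j=1}^{N−1} Γ^{j} · ∑_{i=1}^{N−j} w_i w_{i+j} ). Then the weights w* given by w*_1 = w*_N = 1/(N(1−Γ)+2Γ) and w*_i = (1−Γ)/(N(1−Γ)+2Γ) for 1 < i < N satisfy ∑ w*_i = 1, minimize Q over all weights summing to 1, and achieve the minimum value Q(w*) = u(1−u)(1+Γ)/(N(1−Γ)+2Γ). -/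
import Mathlib


open Finset

/-- Mean squared error of the weighted averaging duty-cycle estimator with
weights `w 0, …, w (N-1)` (0-based; the paper's `w_i` is `w (i-1)`) and sample
correlation factor `Γ`. -/
noncomputable def Qform (u Γ : ℝ) (N : ℕ) (w : ℕ → ℝ) : ℝ :=
  u * (1 - u) *
    (∑ i ∈ Finset.range N, w i ^ 2
      + 2 * ∑ j ∈ Finset.Icc 1 (N - 1), Γ ^ j *
          ∑ i ∈ Finset.range (N - j), w i * w (i + j))

/-- The optimal weighting sequence: the first and last weights are
`1/(N(1-Γ)+2Γ)`, the others `(1-Γ)/(N(1-Γ)+2Γ)`. -/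
noncomputable def wstar (Γ : ℝ) (N : ℕ) (i : ℕ) : ℝ :=
  if i = 0 ∨ i = N - 1 then 1 / ((N : ℝ) * (1 - Γ) + 2 * Γ)
  else (1 - Γ) / ((N : ℝ) * (1 - Γ) + 2 * Γ)

noncomputable def dcT (Γ : ℝ) (N : ℕ) (v : ℕ → ℝ) (k : ℕ) : ℝ :=
  ∑ l ∈ Finset.Ico k N, Γ ^ (l - k) * v l

lemma T_zero (Γ : ℝ) (N : ℕ) (v : ℕ → ℝ) : dcT Γ N v N = 0 := by
  simp [dcT]

lemma T_rec (Γ : ℝ) (N : ℕ) (v : ℕ → ℝ) {k : ℕ} (hk : k < N) :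
    dcT Γ N v k = v k + Γ * dcT Γ N v (k + 1) := by
  unfold dcT
  rw [Finset.sum_eq_sum_Ico_succ_bot hk]
  simp only [Nat.sub_self, pow_zero, one_mul]
  congr 1
  rw [Finset.mul_sum]
  refine Finset.sum_congr rfl fun l hl => ?_
  simp only [Finset.mem_Ico] at hl
  have h : l - k = (l - (k + 1)) + 1 := by omega
  rw [h, pow_succ]
  ring

lemma T_sub (Γ : ℝ) (N : ℕ) (w v : ℕ → ℝ) (k : ℕ) :
    dcT Γ N (fun i => w i - v i) k = dcT Γ N w k - dcT Γ N v k := by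
  simp [dcT, Finset.sum_sub_distrib, mul_sub]



lemma tail_sum (Γ : ℝ) (N : ℕ) (v : ℕ → ℝ) {i : ℕ} (hi : i < N) :
    ∑ j ∈ Finset.Icc 1 (N - 1 - i), Γ ^ j * v (i + j) = dcT Γ N v i - v i := by
  have h : dcT Γ N v i = v i + ∑ l ∈ Finset.Ico (i + 1) N, Γ ^ (l - i) * v l := by
    unfold dcT
    rw [Finset.sum_eq_sum_Ico_succ_bot hi]
    simp
  rw [h]
  have : ∑ j ∈ Finset.Icc 1 (N - 1 - i), Γ ^ j * v (i + j)
      = ∑ l ∈ Finset.Ico (i + 1) N, Γ ^ (l - i) * v l := by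
    refine Finset.sum_bij' (fun j _ => i + j) (fun l _ => l - i) ?_ ?_ ?_ ?_ ?_
    · intro j hj; simp only [Finset.mem_Icc] at hj; simp only [Finset.mem_Ico]; omega
    · intro l hl; simp only [Finset.mem_Ico] at hl; simp only [Finset.mem_Icc]; omega
    · intro j hj; show i + j - i = j; omega
    · intro l hl; simp only [Finset.mem_Ico] at hl; show i + (l - i) = l; omega
    · intro j hj; rw [Nat.add_sub_cancel_left]
  rw [this]; ring

lemma swap_sum (Γ : ℝ) (N : ℕ) (w : ℕ → ℝ) :
    ∑ j ∈ Finset.Icc 1 (N - 1), Γ ^ j * ∑ i ∈ Finset.range (N - j), w i * w (i + j)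
      = ∑ i ∈ Finset.range N, w i * (dcT Γ N w i - w i) := by
  have h1 : ∀ j ∈ Finset.Icc 1 (N - 1),
      Γ ^ j * ∑ i ∈ Finset.range (N - j), w i * w (i + j)
        = ∑ i ∈ Finset.range (N - j), Γ ^ j * (w i * w (i + j)) := fun j _ =>
    Finset.mul_sum _ _ _
  rw [Finset.sum_congr rfl h1]
  rw [Finset.sum_comm' (t' := Finset.range N) (s' := fun i => Finset.Icc 1 (N - 1 - i))
    (by intro j i; simp only [Finset.mem_Icc, Finset.mem_range]; omega)]
  refine Finset.sum_congr rfl fun i hi => ?_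
  simp only [Finset.mem_range] at hi
  rw [← tail_sum Γ N w hi, Finset.mul_sum]
  exact Finset.sum_congr rfl fun j _ => by ring

lemma telescope (c : ℝ) (f : ℕ → ℝ) {N : ℕ} (hN : 1 ≤ N) (hfN : f N = 0) :
    ∑ i ∈ Finset.range N, (f i - c * f (i + 1))
      = f 0 + (1 - c) * ∑ k ∈ Finset.range (N - 1), f (k + 1) := by
  obtain ⟨M, rfl⟩ : ∃ M, N = M + 1 := ⟨N - 1, by omega⟩
  rw [Finset.sum_sub_distrib, Finset.sum_range_succ', ← Finset.mul_sum,
    Finset.sum_range_succ]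
  simp [hfN]
  ring

lemma bracket_eq (Γ : ℝ) (N : ℕ) (hN : 1 ≤ N) (w : ℕ → ℝ) :
    ∑ i ∈ Finset.range N, w i ^ 2
      + 2 * ∑ j ∈ Finset.Icc 1 (N - 1), Γ ^ j *
          ∑ i ∈ Finset.range (N - j), w i * w (i + j)
    = dcT Γ N w 0 ^ 2 + (1 - Γ ^ 2) * ∑ k ∈ Finset.range (N - 1), dcT Γ N w (k + 1) ^ 2 := by
  rw [swap_sum, Finset.mul_sum, ← Finset.sum_add_distrib]
  have h : ∀ i ∈ Finset.range N,
      w i ^ 2 + 2 * (w i * (dcT Γ N w i - w i))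
        = dcT Γ N w i ^ 2 - Γ ^ 2 * dcT Γ N w (i + 1) ^ 2 := by
    intro i hi
    simp only [Finset.mem_range] at hi
    rw [T_rec Γ N w hi]
    ring
  rw [Finset.sum_congr rfl h, telescope (Γ ^ 2) (fun k => dcT Γ N w k ^ 2) hN (by
    simp [T_zero])]

lemma sum_eq (Γ : ℝ) (N : ℕ) (hN : 1 ≤ N) (v : ℕ → ℝ) :
    ∑ i ∈ Finset.range N, v i
      = dcT Γ N v 0 + (1 - Γ) * ∑ k ∈ Finset.range (N - 1), dcT Γ N v (k + 1) := by
  have h : ∀ i ∈ Finset.range N, v i = dcT Γ N v i - Γ * dcT Γ N v (i + 1) := by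
    intro i hi
    simp only [Finset.mem_range] at hi
    rw [T_rec Γ N v hi]; ring
  rw [Finset.sum_congr rfl h, telescope Γ (fun k => dcT Γ N v k) hN (T_zero Γ N v)]

lemma T_wstar (Γ : ℝ) (N : ℕ) (hN : 2 ≤ N) {k : ℕ} (h1 : 1 ≤ k) (hk : k ≤ N - 1) :
    dcT Γ N (wstar Γ N) k = 1 / ((N : ℝ) * (1 - Γ) + 2 * Γ) := by
  obtain ⟨m, rfl⟩ : ∃ m, k = N - 1 - m := ⟨N - 1 - k, by omega⟩
  have hm : m ≤ N - 2 := by omega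
  clear h1 hk
  induction m with
  | zero =>
    rw [T_rec Γ N (wstar Γ N) (by omega : N - 1 - 0 < N)]
    have h2 : N - 1 - 0 + 1 = N := by omega
    rw [h2, T_zero]
    simp [wstar]
  | succ m ih =>
    rw [T_rec Γ N (wstar Γ N) (by omega : N - 1 - (m + 1) < N)]
    have h2 : N - 1 - (m + 1) + 1 = N - 1 - m := by omega
    rw [h2, ih (by omega)]
    have h3 : wstar Γ N (N - 1 - (m + 1))
        = (1 - Γ) / ((N : ℝ) * (1 - Γ) + 2 * Γ) := by
      rw [wstar, if_neg (by omega)]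
    rw [h3]; ring

lemma T_wstar_zero (Γ : ℝ) (N : ℕ) (hN : 2 ≤ N) :
    dcT Γ N (wstar Γ N) 0 = (1 + Γ) / ((N : ℝ) * (1 - Γ) + 2 * Γ) := by
  rw [T_rec Γ N (wstar Γ N) (by omega : 0 < N), T_wstar Γ N hN le_rfl (by omega)]
  have h : wstar Γ N 0 = 1 / ((N : ℝ) * (1 - Γ) + 2 * Γ) := by
    rw [wstar, if_pos (Or.inl rfl)]
  rw [h]; ring

/-- the weights `wstar` sum to one, minimize the mean squared error
`Qform` among all weight sequences summing to one, and achieve the minimum value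
`u(1-u)(1+Γ)/(N(1-Γ)+2Γ)`. -/
theorem optimal_weights (N : ℕ) (hN : 2 ≤ N) (u Γ : ℝ)
    (hu : 0 < u) (hu1 : u < 1) (hΓ : Γ ∈ Set.Ioo (0 : ℝ) 1) :
    (∑ i ∈ Finset.range N, wstar Γ N i = 1)
    ∧ (∀ w : ℕ → ℝ, ∑ i ∈ Finset.range N, w i = 1 →
        Qform u Γ N (wstar Γ N) ≤ Qform u Γ N w)
    ∧ Qform u Γ N (wstar Γ N)
        = u * (1 - u) * (1 + Γ) / ((N : ℝ) * (1 - Γ) + 2 * Γ) := by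
  obtain ⟨hΓ0, hΓ1⟩ := hΓ
  set D : ℝ := (N : ℝ) * (1 - Γ) + 2 * Γ with hD
  have hN2 : (2 : ℝ) ≤ (N : ℝ) := by exact_mod_cast hN
  have hDpos : 0 < D := by nlinarith
  have hN1 : 1 ≤ N := by omega
  -- values of dcT at wstar on range (N-1)
  have hTw : ∀ k ∈ Finset.range (N - 1), dcT Γ N (wstar Γ N) (k + 1) = 1 / D := by
    intro k hk
    simp only [Finset.mem_range] at hk
    exact T_wstar Γ N hN (by omega) (by omega)
  -- sum of wstar equals 1
  have hsum1 : ∑ i ∈ Finset.range N, wstar Γ N i = 1 := by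
    rw [sum_eq Γ N hN1, T_wstar_zero Γ N hN, Finset.sum_congr rfl hTw,
      Finset.sum_const, Finset.card_range, nsmul_eq_mul]
    have hc : ((N - 1 : ℕ) : ℝ) = (N : ℝ) - 1 := by
      rw [Nat.cast_sub hN1]; simp
    rw [hc]
    field_simp
    ring
  have hQstar : Qform u Γ N (wstar Γ N) = u * (1 - u) * (1 + Γ) / D := by
    have hTwsq : ∀ k ∈ Finset.range (N - 1),
        dcT Γ N (wstar Γ N) (k + 1) ^ 2 = (1 / D) ^ 2 := by
      intro k hk; rw [hTw k hk]
    rw [Qform, bracket_eq Γ N hN1, T_wstar_zero Γ N hN, Finset.sum_congr rfl hTwsq,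
      Finset.sum_const, Finset.card_range, nsmul_eq_mul]
    have hc : ((N - 1 : ℕ) : ℝ) = (N : ℝ) - 1 := by
      rw [Nat.cast_sub hN1]; simp
    rw [hc]
    field_simp
    ring
  refine ⟨hsum1, ?_, hQstar⟩
  intro w hw
  set d : ℕ → ℝ := fun i => w i - wstar Γ N i with hd
  have hdsum : ∑ i ∈ Finset.range N, d i = 0 := by
    simp only [hd, Finset.sum_sub_distrib, hw, hsum1, sub_self]
  have hTdec : ∀ k, dcT Γ N w k = dcT Γ N (wstar Γ N) k + dcT Γ N d k := by
    intro k
    have := T_sub Γ N w (wstar Γ N) k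
    rw [← hd] at this
    linarith [this]
  -- cross term vanishes
  have hcross : dcT Γ N (wstar Γ N) 0 * dcT Γ N d 0
      + (1 - Γ ^ 2) * ∑ k ∈ Finset.range (N - 1),
          dcT Γ N (wstar Γ N) (k + 1) * dcT Γ N d (k + 1) = 0 := by
    have h1 : ∀ k ∈ Finset.range (N - 1),
        dcT Γ N (wstar Γ N) (k + 1) * dcT Γ N d (k + 1)
          = 1 / D * dcT Γ N d (k + 1) := by
      intro k hk; rw [hTw k hk]
    rw [Finset.sum_congr rfl h1, ← Finset.mul_sum, T_wstar_zero Γ N hN]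
    have h2 := sum_eq Γ N hN1 d
    rw [hdsum] at h2
    have h3 : dcT Γ N d 0 = -((1 - Γ) * ∑ k ∈ Finset.range (N - 1), dcT Γ N d (k + 1)) := by
      linarith
    rw [h3]
    field_simp
    ring
  -- expansion of Q(w)
  have hexp : Qform u Γ N w = Qform u Γ N (wstar Γ N)
      + u * (1 - u) * (2 * (dcT Γ N (wstar Γ N) 0 * dcT Γ N d 0
          + (1 - Γ ^ 2) * ∑ k ∈ Finset.range (N - 1),
              dcT Γ N (wstar Γ N) (k + 1) * dcT Γ N d (k + 1)))
      + u * (1 - u) * (dcT Γ N d 0 ^ 2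
          + (1 - Γ ^ 2) * ∑ k ∈ Finset.range (N - 1), dcT Γ N d (k + 1) ^ 2) := by
    rw [Qform, Qform, bracket_eq Γ N hN1, bracket_eq Γ N hN1]
    have hsq : ∀ k ∈ Finset.range (N - 1), dcT Γ N w (k + 1) ^ 2
        = dcT Γ N (wstar Γ N) (k + 1) ^ 2
          + 2 * (dcT Γ N (wstar Γ N) (k + 1) * dcT Γ N d (k + 1))
          + dcT Γ N d (k + 1) ^ 2 := by
      intro k _
      rw [hTdec (k + 1)]; ring
    rw [Finset.sum_congr rfl hsq, hTdec 0]
    simp only [Finset.sum_add_distrib]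
    rw [show ∑ x ∈ Finset.range (N - 1),
        2 * (dcT Γ N (wstar Γ N) (x + 1) * dcT Γ N d (x + 1))
      = 2 * ∑ x ∈ Finset.range (N - 1),
        dcT Γ N (wstar Γ N) (x + 1) * dcT Γ N d (x + 1) from
      (Finset.mul_sum _ _ _).symm]
    ring
  rw [hexp, hcross]
  have hS2 : 0 ≤ ∑ k ∈ Finset.range (N - 1), dcT Γ N d (k + 1) ^ 2 :=
    Finset.sum_nonneg fun k _ => sq_nonneg _
  have hupos : 0 < u * (1 - u) := by nlinarith
  have hG2 : (0 : ℝ) ≤ 1 - Γ ^ 2 := by nlinarith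
  nlinarith [mul_nonneg hupos.le
    (add_nonneg (sq_nonneg (dcT Γ N d 0)) (mul_nonneg hG2 hS2))]
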